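/- Let γ > 0, ω ∈ ℝ, and t₁, t₂ > 0. Define v : ℝ ∖ {0} → ℝ by v(x) = e^{(ω+1)/2} e^{−(x+t₁)²/2} for x > 0 and v(x) = −e^{(ω+1)/2} e^{−(x−t₂)²/2} for x < 0. Then v and its derivative v′ have one-sided limits v(0±), v′(0±) at the origin, v′(0+) = v′(0−) holds if and only if t₁ e^{−t₁²/2} = t₂ e^{−t₂²/2}, and, given v′(0+) = v′(0−), the jump condition v(0+) − v(0−) = −γ v′(0+) holds if and only if 1/t₁ + 1/t₂ = γ. -/

import Mathlib

open Filter Topology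

/-- The candidate ground-state profile `φ_ω^{t₁,t₂}`. -/
noncomputable def groundProfile (ω t₁ t₂ : ℝ) (x : ℝ) : ℝ :=
  if 0 < x then Real.exp ((ω + 1) / 2) * Real.exp (-(x + t₁) ^ 2 / 2)
  else -(Real.exp ((ω + 1) / 2) * Real.exp (-(x - t₂) ^ 2 / 2))

lemma gaussDeriv (C t x : ℝ) :
    HasDerivAt (fun y : ℝ => C * Real.exp (-(y + t) ^ 2 / 2))
      (C * (-(x + t) * Real.exp (-(x + t) ^ 2 / 2))) x := by
  have h1 : HasDerivAt (fun y : ℝ => -(y + t) ^ 2 / 2) (-(x + t)) x := by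
    have := (((hasDerivAt_id x).add_const t).pow 2).neg.div_const 2
    exact this.congr_deriv (by simp; ring)
  have := h1.exp.const_mul C
  exact this.congr_deriv (by ring)

lemma gaussCont (C t : ℝ) : Continuous (fun y : ℝ => C * Real.exp (-(y + t) ^ 2 / 2)) := by
  fun_prop

/-- The profile `v = φ_ω^{t₁,t₂}` and its derivative have one-sided limits at `0`;
the matching `v'(0+) = v'(0-)` holds iff `t₁ e^{-t₁²/2} = t₂ e^{-t₂²/2}`, and, given the
matching of derivatives, the jump condition `v(0+) - v(0-) = -γ v'(0+)` holds iff
`1/t₁ + 1/t₂ = γ`. -/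
theorem profile_boundary_conditions (γ ω t₁ t₂ : ℝ) (hγ : 0 < γ)
    (ht₁ : 0 < t₁) (ht₂ : 0 < t₂) :
    ∃ (v' : ℝ → ℝ) (Lp Lm Dp Dm : ℝ),
      (∀ x : ℝ, x ≠ 0 → HasDerivAt (groundProfile ω t₁ t₂) (v' x) x) ∧
      Tendsto (groundProfile ω t₁ t₂) (𝓝[>] 0) (𝓝 Lp) ∧
      Tendsto (groundProfile ω t₁ t₂) (𝓝[<] 0) (𝓝 Lm) ∧
      Tendsto v' (𝓝[>] 0) (𝓝 Dp) ∧
      Tendsto v' (𝓝[<] 0) (𝓝 Dm) ∧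
      (Dp = Dm ↔ t₁ * Real.exp (-t₁ ^ 2 / 2) = t₂ * Real.exp (-t₂ ^ 2 / 2)) ∧
      (Dp = Dm → ((Lp - Lm = -γ * Dp) ↔ 1 / t₁ + 1 / t₂ = γ)) := by
  set C := Real.exp ((ω + 1) / 2) with hCdef
  have hC : 0 < C := Real.exp_pos _
  set E₁ := Real.exp (-t₁ ^ 2 / 2) with hE₁def
  set E₂ := Real.exp (-t₂ ^ 2 / 2) with hE₂def
  have hE₁ : 0 < E₁ := Real.exp_pos _
  have hE₂ : 0 < E₂ := Real.exp_pos _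
  -- the two smooth pieces
  set g₁ : ℝ → ℝ := fun y => C * Real.exp (-(y + t₁) ^ 2 / 2) with hg₁
  set g₂ : ℝ → ℝ := fun y => -(C * Real.exp (-(y + -t₂) ^ 2 / 2)) with hg₂
  have hgp : ∀ y ∈ Set.Ioi (0:ℝ), groundProfile ω t₁ t₂ y = g₁ y := by
    intro y hy
    simp [groundProfile, hg₁, Set.mem_Ioi.mp hy, hCdef]
  have hgm : ∀ y ∈ Set.Iio (0:ℝ), groundProfile ω t₁ t₂ y = g₂ y := by
    intro y hy
    have : ¬ (0 < y) := by exact not_lt.mpr (le_of_lt (Set.mem_Iio.mp hy))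
    simp only [groundProfile, hg₂, if_neg this, sub_eq_add_neg, hCdef]
  refine ⟨fun x => if 0 < x then C * (-(x + t₁) * Real.exp (-(x + t₁) ^ 2 / 2))
      else -(C * (-(x + -t₂) * Real.exp (-(x + -t₂) ^ 2 / 2))),
    C * E₁, -(C * E₂), -(C * (t₁ * E₁)), -(C * (t₂ * E₂)), ?_, ?_, ?_, ?_, ?_, ?_, ?_⟩
  · intro x hx
    rcases hx.lt_or_gt with h | h
    · have hev : groundProfile ω t₁ t₂ =ᶠ[𝓝 x] g₂ := by
        filter_upwards [Iio_mem_nhds h] with y hy using hgm y hy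
      simp only [if_neg (not_lt.mpr h.le)]
      exact ((gaussDeriv C (-t₂) x).neg).congr_of_eventuallyEq hev
    · have hev : groundProfile ω t₁ t₂ =ᶠ[𝓝 x] g₁ := by
        filter_upwards [Ioi_mem_nhds h] with y hy using hgp y hy
      simp only [if_pos h]
      exact (gaussDeriv C t₁ x).congr_of_eventuallyEq hev
  · have h1 : Tendsto g₁ (𝓝[>] (0:ℝ)) (𝓝 (C * E₁)) := by
      have := ((gaussCont C t₁).tendsto 0).mono_left (nhdsWithin_le_nhds (s := Set.Ioi 0))
      simpa [hg₁, hE₁def] using this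
    refine h1.congr' ?_
    filter_upwards [self_mem_nhdsWithin] with y hy using (hgp y hy).symm
  · have h1 : Tendsto g₂ (𝓝[<] (0:ℝ)) (𝓝 (-(C * E₂))) := by
      have := (((gaussCont C (-t₂)).neg).tendsto 0).mono_left
        (nhdsWithin_le_nhds (s := Set.Iio 0))
      have h00 : (-(C * Real.exp (-(0 + -t₂) ^ 2 / 2))) = -(C * E₂) := by
        norm_num [hE₂def]
      simpa [hg₂, h00, Pi.neg_def, ← hE₂def] using this
    refine h1.congr' ?_
    filter_upwards [self_mem_nhdsWithin] with y hy using (hgm y hy).symm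
  · have hc : Continuous (fun x : ℝ => C * (-(x + t₁) * Real.exp (-(x + t₁) ^ 2 / 2))) := by
      fun_prop
    have h1 := (hc.tendsto 0).mono_left (nhdsWithin_le_nhds (s := Set.Ioi 0))
    have h00 : C * (-(0 + t₁) * Real.exp (-(0 + t₁) ^ 2 / 2)) = -(C * (t₁ * E₁)) := by
      norm_num [hE₁def]
    rw [h00] at h1
    refine h1.congr' ?_
    filter_upwards [self_mem_nhdsWithin] with y hy
    simp [Set.mem_Ioi.mp hy]
  · have hc : Continuous (fun x : ℝ => -(C * (-(x + -t₂) * Real.exp (-(x + -t₂) ^ 2 / 2)))) := by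
      fun_prop
    have h1 := (hc.tendsto 0).mono_left (nhdsWithin_le_nhds (s := Set.Iio 0))
    have h00 : -(C * (-(0 + -t₂) * Real.exp (-(0 + -t₂) ^ 2 / 2))) = -(C * (t₂ * E₂)) := by
      norm_num [hE₂def]
    rw [h00] at h1
    refine h1.congr' ?_
    filter_upwards [self_mem_nhdsWithin] with y hy
    simp [not_lt.mpr (le_of_lt (Set.mem_Iio.mp hy))]
  · rw [neg_inj, mul_right_inj' hC.ne']
  · intro hD
    have h' : t₁ * E₁ = t₂ * E₂ := mul_left_cancel₀ hC.ne' (neg_inj.mp hD)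
    constructor
    · intro h
      have h2 : (C * E₁) * (t₂ + t₁) = (C * E₁) * (γ * (t₁ * t₂)) := by
        linear_combination t₂ * h + C * h'
      have h3 : t₂ + t₁ = γ * (t₁ * t₂) := mul_left_cancel₀ (by positivity) h2
      rw [div_add_div _ _ ht₁.ne' ht₂.ne', div_eq_iff (by positivity)]
      linarith
    · intro h
      rw [div_add_div _ _ ht₁.ne' ht₂.ne', div_eq_iff (by positivity)] at h
      have key : (C * E₁ - -(C * E₂) - (-γ * -(C * (t₁ * E₁)))) * t₂ = 0 := by
        linear_combination (C * E₁) * h - C * h'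
      have h0 := (mul_eq_zero.mp key).resolve_right ht₂.ne'
      linarith
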